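/- arXiv:1501.04131 — 2 statements merged into one kernel-verified Lean document; each statement's English description precedes it below -/
import Mathlib

section
/- Let T be a finite tree with a designated root, g_e > 0 strictly positive conductances on its edges, K = K_{1/g} the path-sum matrix with weights 1/g_e, and Σ_p a symmetric matrix indexed by the non-root vertices with all entries strictly positive. Set Σ_ε = K Σ_p K. Then for any non-root vertex a whose parent b is also non-root: Σ_ε(a,a) > Σ_ε(a,b). -/
open Classical

/-- A finite tree with a designated root vertex (the slack bus). -/
structure GridTree (V : Type*) [Fintype V] [DecidableEq V] where
  graph : SimpleGraph V
  root : V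
  isTree : graph.IsTree

namespace GridTree

variable {V : Type*} [Fintype V] [DecidableEq V] (T : GridTree V)

/-- The unique path (as a walk) from a vertex to the root. -/
noncomputable def pathToRoot (a : V) : T.graph.Walk a T.root :=
  (T.isTree.existsUnique_path a T.root).choose

/-- `E_a`: the set of edges on the unique path from `a` to the root. -/
noncomputable def pathEdges (a : V) : Finset (Sym2 V) :=
  (T.pathToRoot a).edges.toFinset

/-- `c` is a descendant of `a`: `a` lies on the unique path from `c` to the root
(in particular every vertex is a descendant of itself). -/
def Descendant (c a : V) : Prop := a ∈ (T.pathToRoot c).support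

/-- `b` is the parent of `a`: the edge `{a, b}` lies on the path from `a` to the root
(equivalently, `b` is the unique neighbor of `a` on that path). -/
noncomputable def IsParent (a b : V) : Prop := s(a, b) ∈ T.pathEdges a

/-- The path-sum matrix `K_w`, indexed by the non-root vertices:
`K_w(a,b) = ∑_{e ∈ E_a ∩ E_b} w_e`. -/
noncomputable def pathMatrix (w : Sym2 V → ℝ) :
    Matrix {v : V // v ≠ T.root} {v : V // v ≠ T.root} ℝ :=
  fun a b => ∑ e ∈ T.pathEdges a.1 ∩ T.pathEdges b.1, w e

/-- The reduced weighted graph Laplacian with edge weights `w`, indexed by the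
non-root vertices (the row and column of the root are deleted). -/
noncomputable def lap (w : Sym2 V → ℝ) :
    Matrix {v : V // v ≠ T.root} {v : V // v ≠ T.root} ℝ :=
  fun a b =>
    if a = b then ∑ c ∈ Finset.univ.filter (fun c => T.graph.Adj a.1 c), w s(a.1, c)
    else if T.graph.Adj a.1 b.1 then - w s(a.1, b.1) else 0

end GridTree


namespace GridTree

variable {V : Type*} [Fintype V] [DecidableEq V] (T : GridTree V)

lemma pathToRoot_isPath (a : V) : (T.pathToRoot a).IsPath :=
  (T.isTree.existsUnique_path a T.root).choose_spec.1

lemma pathEdges_mem_edgeSet {a : V} {e : Sym2 V} (he : e ∈ T.pathEdges a) :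
    e ∈ T.graph.edgeSet :=
  (T.pathToRoot a).edges_subset_edgeSet (List.mem_toFinset.mp he)

lemma exists_cons_of_mem_edges {G : SimpleGraph V} {u r b : V} (p : G.Walk u r)
    (hp : p.IsPath) (hmem : s(u, b) ∈ p.edges) :
    ∃ (h : G.Adj u b) (q : G.Walk b r), p = SimpleGraph.Walk.cons h q := by
  cases p with
  | nil => simp at hmem
  | cons h' q =>
    rw [SimpleGraph.Walk.edges_cons, List.mem_cons] at hmem
    rcases hmem with heq | hmem
    · rcases Sym2.eq_iff.mp heq with ⟨-, rfl⟩ | ⟨huc, -⟩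
      · exact ⟨h', q, rfl⟩
      · exact absurd huc h'.ne
    · have : u ∈ q.support := q.fst_mem_support_of_mem_edges hmem
      rw [SimpleGraph.Walk.cons_isPath_iff] at hp
      exact absurd this hp.2

lemma parent_pathEdges {a b : V} (hab : T.IsParent a b) :
    T.pathEdges a = insert s(a, b) (T.pathEdges b) ∧ s(a, b) ∉ T.pathEdges b := by
  have hmem : s(a, b) ∈ (T.pathToRoot a).edges := List.mem_toFinset.mp hab
  obtain ⟨h, q, hq⟩ := exists_cons_of_mem_edges (T.pathToRoot a) (T.pathToRoot_isPath a) hmem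
  have hqpath : (SimpleGraph.Walk.cons h q).IsPath := hq ▸ T.pathToRoot_isPath a
  rw [SimpleGraph.Walk.cons_isPath_iff] at hqpath
  have hq' : q = T.pathToRoot b :=
    (T.isTree.existsUnique_path b T.root).choose_spec.2 q hqpath.1
  constructor
  · unfold pathEdges
    rw [hq, SimpleGraph.Walk.edges_cons, List.toFinset_cons, hq']
  · intro hcon
    have : a ∈ (T.pathToRoot b).support :=
      (T.pathToRoot b).fst_mem_support_of_mem_edges (List.mem_toFinset.mp hcon)
    rw [← hq'] at this
    exact hqpath.2 this

end GridTree

/-- In the DC-resistive model `Σ_ε = K Σ_p K` with `K = K_{1/g}` and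
`Σ_p` symmetric entrywise positive, for a non-root vertex `a` with non-root parent `b`:
`Σ_ε(a,a) > Σ_ε(a,b)`. -/
theorem sigma_eps_diag_gt_parent_entry
    {V : Type*} [Fintype V] [DecidableEq V] (T : GridTree V)
    (g : Sym2 V → ℝ) (hg : ∀ e ∈ T.graph.edgeSet, 0 < g e)
    (Sp : Matrix {v : V // v ≠ T.root} {v : V // v ≠ T.root} ℝ)
    (hsym : Sp.IsSymm) (hpos : ∀ i j, 0 < Sp i j)
    (a b : {v : V // v ≠ T.root}) (hab : T.IsParent a.1 b.1) :
    (T.pathMatrix (fun e => (g e)⁻¹) * Sp * T.pathMatrix (fun e => (g e)⁻¹)) a a >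
      (T.pathMatrix (fun e => (g e)⁻¹) * Sp * T.pathMatrix (fun e => (g e)⁻¹)) a b := by
  set w : Sym2 V → ℝ := fun e => (g e)⁻¹ with hw
  set K := T.pathMatrix w with hK
  obtain ⟨hEa, hnm⟩ := T.parent_pathEdges hab
  have he0 : s(a.1, b.1) ∈ T.graph.edgeSet := T.pathEdges_mem_edgeSet hab
  have hw0 : 0 < w s(a.1, b.1) := inv_pos.mpr (hg _ he0)
  have hwnn : ∀ c : V, ∀ e ∈ T.pathEdges c, 0 ≤ w e := fun c e he =>
    le_of_lt (inv_pos.mpr (hg _ (T.pathEdges_mem_edgeSet he)))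
  have hsub : T.pathEdges b.1 ⊆ T.pathEdges a.1 := by
    rw [hEa]; exact Finset.subset_insert _ _
  have hKnn : ∀ c d : {v : V // v ≠ T.root}, 0 ≤ K c d := by
    intro c d
    exact Finset.sum_nonneg fun e he => hwnn c.1 e (Finset.mem_inter.mp he).1
  have hmono : ∀ d : {v : V // v ≠ T.root}, K d b ≤ K d a := by
    intro d
    exact Finset.sum_le_sum_of_subset_of_nonneg
      (Finset.inter_subset_inter_left hsub)
      (fun e he _ => hwnn d.1 e (Finset.mem_inter.mp he).1)
  have hgap : K a b < K a a := by
    show (∑ e ∈ T.pathEdges a.1 ∩ T.pathEdges b.1, w e) <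
      ∑ e ∈ T.pathEdges a.1 ∩ T.pathEdges a.1, w e
    rw [Finset.inter_self, Finset.inter_eq_right.mpr hsub, hEa,
      Finset.sum_insert hnm]
    linarith
  have hKaa_pos : 0 < K a a := lt_of_le_of_lt (hKnn a b) hgap
  have hrow : ∀ d : {v : V // v ≠ T.root}, 0 < (K * Sp) a d := by
    intro d
    rw [Matrix.mul_apply]
    exact Finset.sum_pos' (fun c _ => mul_nonneg (hKnn a c) (hpos c d).le)
      ⟨a, Finset.mem_univ a, mul_pos hKaa_pos (hpos a d)⟩
  show (K * Sp * K) a b < (K * Sp * K) a a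
  rw [Matrix.mul_apply, Matrix.mul_apply]
  exact Finset.sum_lt_sum
    (fun d _ => mul_le_mul_of_nonneg_left (hmono d) (hrow d).le)
    ⟨a, Finset.mem_univ a, (mul_lt_mul_iff_right₀ (hrow a)).mpr hgap⟩
end

section
/- Let T be a finite tree with a designated root, let u_e and w_e be two families of real edge weights with corresponding path-sum matrices K_u and K_w, and let Σ be any matrix indexed by the non-root vertices. Then for any non-root vertex a whose parent b is also non-root: (K_u Σ K_w)(a,a) - (K_u Σ K_w)(a,b) - (K_u Σ K_w)(b,a) + (K_u Σ K_w)(b,b) = u_{ab} · w_{ab} · Σ_{c,d ∈ D_a} Σ(c,d), where u_{ab}, w_{ab} are the weights of the edge {a,b} and the sum runs over all ordered pairs (c,d) of descendants of a. -/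
open Classical

namespace GridTree

variable {V : Type*} [Fintype V] [DecidableEq V] (T : GridTree V)

lemma pathToRoot_unique {a : V} (p : T.graph.Walk a T.root) (hp : p.IsPath) :
    p = T.pathToRoot a :=
  (T.isTree.existsUnique_path a T.root).choose_spec.2 p hp

lemma parent_cons {a b : V} (hab : T.IsParent a b) :
    ∃ h : T.graph.Adj a b, T.pathToRoot a = SimpleGraph.Walk.cons h (T.pathToRoot b) := by
  have hp := T.pathToRoot_isPath a
  have he : s(a, b) ∈ (T.pathToRoot a).edges := by
    have := hab
    unfold IsParent pathEdges at this
    simpa using this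
  revert hp he
  generalize T.pathToRoot a = p
  intro hp he
  cases p with
  | nil => simp at he
  | @cons _ x _ h q =>
    rw [SimpleGraph.Walk.edges_cons, List.mem_cons] at he
    rw [SimpleGraph.Walk.cons_isPath_iff] at hp
    rcases he with he | he
    · have hbx : b = x := Sym2.congr_right.mp he
      subst hbx
      refine ⟨h, ?_⟩
      rw [T.pathToRoot_unique q hp.1]
    · exact absurd (q.fst_mem_support_of_mem_edges he) hp.2

lemma descendant_iff_edge_mem {a b c : V} (hab : T.IsParent a b) :
    T.Descendant c a ↔ s(a, b) ∈ T.pathEdges c := by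
  constructor
  · intro hd
    have hsup : a ∈ (T.pathToRoot c).support := hd
    have hdrop : ((T.pathToRoot c).dropUntil a hsup) = T.pathToRoot a :=
      T.pathToRoot_unique _ ((T.pathToRoot_isPath c).dropUntil hsup)
    have he : s(a, b) ∈ (T.pathToRoot a).edges := by
      have := hab; unfold IsParent pathEdges at this; simpa using this
    unfold pathEdges
    rw [List.mem_toFinset, ← (T.pathToRoot c).take_spec hsup,
      SimpleGraph.Walk.edges_append, List.mem_append]
    right
    rw [hdrop]
    exact he
  · intro hmem
    unfold pathEdges at hmem
    rw [List.mem_toFinset] at hmem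
    exact (T.pathToRoot c).fst_mem_support_of_mem_edges hmem

lemma key_diff {a b : V} (hab : T.IsParent a b) (u : Sym2 V → ℝ) (c : V) :
    (∑ e ∈ T.pathEdges c ∩ T.pathEdges a, u e) - (∑ e ∈ T.pathEdges c ∩ T.pathEdges b, u e)
      = if T.Descendant c a then u s(a, b) else 0 := by
  obtain ⟨hins, hnot⟩ := T.parent_pathEdges hab
  rw [hins]
  by_cases hd : T.Descendant c a
  · have hmem : s(a, b) ∈ T.pathEdges c := (T.descendant_iff_edge_mem hab).mp hd
    rw [Finset.inter_insert_of_mem hmem, Finset.sum_insert (by simp [hnot]), if_pos hd]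
    ring
  · have hmem : s(a, b) ∉ T.pathEdges c := fun h => hd ((T.descendant_iff_edge_mem hab).mpr h)
    rw [Finset.inter_insert_of_notMem hmem, if_neg hd]
    ring

end GridTree

/-- For any two families of real edge weights `u, w` with path-sum
matrices `K_u, K_w` and any matrix `Σ` on the non-root vertices, for a non-root
vertex `a` with non-root parent `b`:
`(K_u Σ K_w)(a,a) - (K_u Σ K_w)(a,b) - (K_u Σ K_w)(b,a) + (K_u Σ K_w)(b,b)
  = u_{ab} w_{ab} ∑_{c,d ∈ D_a} Σ(c,d)`. -/
theorem pathMatrix_sandwich_squared_difference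
    {V : Type*} [Fintype V] [DecidableEq V] (T : GridTree V)
    (u w : Sym2 V → ℝ)
    (S : Matrix {v : V // v ≠ T.root} {v : V // v ≠ T.root} ℝ)
    (a b : {v : V // v ≠ T.root}) (hab : T.IsParent a.1 b.1) :
    (T.pathMatrix u * S * T.pathMatrix w) a a -
      (T.pathMatrix u * S * T.pathMatrix w) a b -
      (T.pathMatrix u * S * T.pathMatrix w) b a +
      (T.pathMatrix u * S * T.pathMatrix w) b b =
    u s(a.1, b.1) * w s(a.1, b.1) *
      ∑ c ∈ Finset.univ.filter (fun c : {v : V // v ≠ T.root} => T.Descendant c.1 a.1),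
        ∑ d ∈ Finset.univ.filter (fun d : {v : V // v ≠ T.root} => T.Descendant d.1 a.1),
          S c d := by
  have expand : ∀ x y : {v : V // v ≠ T.root},
      (T.pathMatrix u * S * T.pathMatrix w) x y
        = ∑ d, ∑ c, T.pathMatrix u x c * S c d * T.pathMatrix w d y := by
    intro x y
    simp only [Matrix.mul_apply, Finset.sum_mul]
  rw [expand, expand, expand, expand]
  rw [← Finset.sum_sub_distrib, ← Finset.sum_sub_distrib, ← Finset.sum_add_distrib]
  have hKu : ∀ c : {v : V // v ≠ T.root},
      T.pathMatrix u a c - T.pathMatrix u b c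
        = if T.Descendant c.1 a.1 then u s(a.1, b.1) else 0 := by
    intro c
    have h1 : T.pathMatrix u a c = ∑ e ∈ T.pathEdges c.1 ∩ T.pathEdges a.1, u e := by
      simp only [GridTree.pathMatrix]; rw [Finset.inter_comm]
    have h2 : T.pathMatrix u b c = ∑ e ∈ T.pathEdges c.1 ∩ T.pathEdges b.1, u e := by
      simp only [GridTree.pathMatrix]; rw [Finset.inter_comm]
    rw [h1, h2]
    exact T.key_diff hab u c.1
  have hKw : ∀ d : {v : V // v ≠ T.root},
      T.pathMatrix w d a - T.pathMatrix w d b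
        = if T.Descendant d.1 a.1 then w s(a.1, b.1) else 0 := by
    intro d
    have h1 : T.pathMatrix w d a = ∑ e ∈ T.pathEdges d.1 ∩ T.pathEdges a.1, w e := rfl
    have h2 : T.pathMatrix w d b = ∑ e ∈ T.pathEdges d.1 ∩ T.pathEdges b.1, w e := rfl
    rw [h1, h2]
    exact T.key_diff hab w d.1
  calc ∑ d, ((∑ c, T.pathMatrix u a c * S c d * T.pathMatrix w d a -
          ∑ c, T.pathMatrix u a c * S c d * T.pathMatrix w d b) -
        ∑ c, T.pathMatrix u b c * S c d * T.pathMatrix w d a +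
        ∑ c, T.pathMatrix u b c * S c d * T.pathMatrix w d b)
      = ∑ d, ∑ c, (T.pathMatrix u a c - T.pathMatrix u b c) * S c d *
          (T.pathMatrix w d a - T.pathMatrix w d b) := by
        refine Finset.sum_congr rfl fun d _ => ?_
        rw [← Finset.sum_sub_distrib, ← Finset.sum_sub_distrib, ← Finset.sum_add_distrib]
        exact Finset.sum_congr rfl fun c _ => by ring
    _ = ∑ d, ∑ c, (if T.Descendant c.1 a.1 then u s(a.1, b.1) else 0) * S c d *
          (if T.Descendant d.1 a.1 then w s(a.1, b.1) else 0) := by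
        simp only [hKu, hKw]
    _ = _ := by
        rw [Finset.sum_comm]
        simp only [Finset.mul_sum, Finset.sum_filter]
        refine Finset.sum_congr rfl fun c _ => ?_
        by_cases hc : T.Descendant c.1 a.1
        · simp only [hc, if_true, Finset.mul_sum]
          refine Finset.sum_congr rfl fun d _ => ?_
          by_cases hd : T.Descendant d.1 a.1 <;> simp [hd] <;> ring
        · simp [hc]
end
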